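/- arXiv:2601.22259 — 2 statements merged into one kernel-verified Lean document; each statement's English description precedes it below -/
import Mathlib

section
/- Let (Ω, P) be a probability space, X a random variable, and T, C real-valued random variables with T ⟂ C | X (conditional independence given X). For a fixed time t, let Y = 1{T ≤ t}. Then for any measurable function p of X taking values in (0,1), E[1{C > t}·BCE(p(X), Y)] = E[P(C > t | X)·(q(X)·(-log p(X)) + (1-q(X))·(-log(1-p(X))))], where q(X) = P(Y = 1 | X). -/
open MeasureTheory ProbabilityTheory Real ENNReal

/-- Tower-type lemma at the `lintegral` level: for a bounded nonnegative measurable `f`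
and an `m`-measurable weight `g`, integrating `f` against `g` is the same as integrating
`μ[f|m]` against `g`. -/
lemma lintegral_condexp_mul_of_measurable
    {Ω : Type*} {m : MeasurableSpace Ω} {mΩ : MeasurableSpace Ω} (hm : m ≤ mΩ)
    (μ : Measure Ω) [IsFiniteMeasure μ] {f : Ω → ℝ} (hfm : Measurable f)
    (hf0 : 0 ≤ f) (hf1 : f ≤ 1) {g : Ω → ℝ≥0∞} (hg : Measurable[m] g) :
    ∫⁻ ω, ENNReal.ofReal (f ω) * g ω ∂μ
      = ∫⁻ ω, ENNReal.ofReal ((μ[f|m]) ω) * g ω ∂μ := by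
  have hfi : Integrable f μ := by
    refine (integrable_const (1:ℝ)).mono' hfm.aestronglyMeasurable ?_
    exact Filter.Eventually.of_forall fun ω => by
      rw [Real.norm_eq_abs, abs_of_nonneg (hf0 ω)]; exact hf1 ω
  have hof : Measurable fun ω => ENNReal.ofReal (f ω) := hfm.ennreal_ofReal
  have hocm : Measurable[m] fun ω => ENNReal.ofReal ((μ[f|m]) ω) :=
    stronglyMeasurable_condExp.measurable.ennreal_ofReal
  have hoc : Measurable[mΩ] fun ω => ENNReal.ofReal ((μ[f|m]) ω) := hocm.mono hm le_rfl
  have hgm : Measurable g := hg.mono hm le_rfl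
  have htrim : (μ.withDensity fun ω => ENNReal.ofReal (f ω)).trim hm
      = (μ.withDensity fun ω => ENNReal.ofReal ((μ[f|m]) ω)).trim hm := by
    refine @Measure.ext Ω m _ _ fun s hs => ?_
    rw [trim_measurableSet_eq hm hs, trim_measurableSet_eq hm hs,
      withDensity_apply _ (hm s hs), withDensity_apply _ (hm s hs),
      ← ofReal_integral_eq_lintegral_ofReal hfi.restrict
        (ae_restrict_of_ae (Filter.Eventually.of_forall hf0)),
      ← ofReal_integral_eq_lintegral_ofReal integrable_condExp.restrict
        (ae_restrict_of_ae (condExp_nonneg (Filter.Eventually.of_forall hf0))),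
      setIntegral_condExp hm hfi hs]
  calc ∫⁻ ω, ENNReal.ofReal (f ω) * g ω ∂μ
      = ∫⁻ ω, g ω ∂(μ.withDensity fun ω => ENNReal.ofReal (f ω)) := by
        rw [lintegral_withDensity_eq_lintegral_mul _ hof hgm]; rfl
    _ = ∫⁻ ω, g ω ∂((μ.withDensity fun ω => ENNReal.ofReal (f ω)).trim hm) :=
        (lintegral_trim hm hg).symm
    _ = ∫⁻ ω, g ω ∂((μ.withDensity fun ω => ENNReal.ofReal ((μ[f|m]) ω)).trim hm) := by
        rw [htrim]
    _ = ∫⁻ ω, g ω ∂(μ.withDensity fun ω => ENNReal.ofReal ((μ[f|m]) ω)) :=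
        lintegral_trim hm hg
    _ = ∫⁻ ω, ENNReal.ofReal ((μ[f|m]) ω) * g ω ∂μ := by
        rw [lintegral_withDensity_eq_lintegral_mul _ hoc hgm]; rfl

/-- Variant with a real-valued nonnegative `m`-measurable weight. -/
lemma lintegral_ofReal_condexp_mul
    {Ω : Type*} {m : MeasurableSpace Ω} {mΩ : MeasurableSpace Ω} (hm : m ≤ mΩ)
    (μ : Measure Ω) [IsFiniteMeasure μ] {f a : Ω → ℝ} (hfm : Measurable f)
    (hf0 : 0 ≤ f) (hf1 : f ≤ 1) (ham : Measurable[m] a) (ha0 : ∀ ω, 0 ≤ a ω) :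
    ∫⁻ ω, ENNReal.ofReal (f ω * a ω) ∂μ
      = ∫⁻ ω, ENNReal.ofReal ((μ[f|m]) ω * a ω) ∂μ := by
  have hg : Measurable[m] fun ω => ENNReal.ofReal (a ω) := ham.ennreal_ofReal
  calc ∫⁻ ω, ENNReal.ofReal (f ω * a ω) ∂μ
      = ∫⁻ ω, ENNReal.ofReal (f ω) * ENNReal.ofReal (a ω) ∂μ := by
        refine lintegral_congr fun ω => ?_
        rw [ENNReal.ofReal_mul (hf0 ω)]
    _ = ∫⁻ ω, ENNReal.ofReal ((μ[f|m]) ω) * ENNReal.ofReal (a ω) ∂μ :=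
        lintegral_condexp_mul_of_measurable hm μ hfm hf0 hf1 hg
    _ = ∫⁻ ω, ENNReal.ofReal ((μ[f|m]) ω * a ω) ∂μ := by
        refine lintegral_congr_ae ?_
        filter_upwards [condExp_nonneg (μ := μ) (m := m) (f := f)
          (Filter.Eventually.of_forall hf0)] with ω hω
        rw [ENNReal.ofReal_mul hω]

/-- Under conditional independence of `T` and `C` given `X`, the censored expected BCE loss
factorizes: `E[1{C > t}·BCE(p(X), Y)] = E[P(C > t | X)·(q(X)(-log p(X)) + (1-q(X))(-log(1-p(X))))]`
where `Y = 1{T ≤ t}` and `q(X) = P(Y = 1 | X)`. -/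
theorem censored_bce_loss_factorization
    {Ω β : Type*} {mΩ : MeasurableSpace Ω} [StandardBorelSpace Ω] [MeasurableSpace β]
    (μ : Measure Ω) [IsProbabilityMeasure μ]
    (X : Ω → β) (T C : Ω → ℝ) (hT : Measurable T) (hC : Measurable C)
    (hm : MeasurableSpace.comap X inferInstance ≤ mΩ)
    (hTC : CondIndepFun (MeasurableSpace.comap X inferInstance) hm T C μ)
    (t : ℝ)
    (Y : Ω → ℝ) (hY : ∀ ω, Y ω = if T ω ≤ t then 1 else 0)
    (G : Ω → ℝ) (hG : ∀ ω, G ω = if t < C ω then 1 else 0)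
    (p : Ω → ℝ) (hpmeas : Measurable[MeasurableSpace.comap X inferInstance] p)
    (hp01 : ∀ ω, p ω ∈ Set.Ioo (0:ℝ) 1) :
    ∫ ω, G ω * (-(Y ω * Real.log (p ω) + (1 - Y ω) * Real.log (1 - p ω))) ∂μ
      = ∫ ω, (condExp (MeasurableSpace.comap X inferInstance) μ G ω)
          * ((condExp (MeasurableSpace.comap X inferInstance) μ Y ω) * (-Real.log (p ω))
            + (1 - condExp (MeasurableSpace.comap X inferInstance) μ Y ω)
              * (-Real.log (1 - p ω))) ∂μ := by
  classical
  set m := MeasurableSpace.comap X inferInstance with hm_def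
  set A := T ⁻¹' Set.Iic t with hA_def
  set A' := T ⁻¹' Set.Ioi t with hA'_def
  set B := C ⁻¹' Set.Ioi t with hB_def
  have hA : MeasurableSet[mΩ] A := hT measurableSet_Iic
  have hA' : MeasurableSet[mΩ] A' := hT measurableSet_Ioi
  have hB : MeasurableSet[mΩ] B := hC measurableSet_Ioi
  -- weights
  set a := fun ω => -Real.log (p ω) with ha_def
  set b := fun ω => -Real.log (1 - p ω) with hb_def
  have ha0 : ∀ ω, 0 ≤ a ω := fun ω => by
    simp only [ha_def, neg_nonneg]
    exact Real.log_nonpos (hp01 ω).1.le (hp01 ω).2.le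
  have hb0 : ∀ ω, 0 ≤ b ω := fun ω => by
    simp only [hb_def, neg_nonneg]
    refine Real.log_nonpos (by linarith [(hp01 ω).2]) (by linarith [(hp01 ω).1])
  have ham : Measurable[m] a := (Real.measurable_log.comp hpmeas).neg
  have hbm : Measurable[m] b := (Real.measurable_log.comp (measurable_const.sub hpmeas)).neg
  -- indicator descriptions
  have hYind : Y = A.indicator fun _ => (1:ℝ) := funext fun ω => by
    rw [hY ω, Set.indicator_apply]
    by_cases h : T ω ≤ t <;> simp [hA_def, h]
  have hGind : G = B.indicator fun _ => (1:ℝ) := funext fun ω => by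
    rw [hG ω, Set.indicator_apply]
    by_cases h : t < C ω <;> simp [hB_def, h]
  set F₁ := (A ∩ B).indicator fun _ => (1:ℝ) with hF₁_def
  set F₂ := (A' ∩ B).indicator fun _ => (1:ℝ) with hF₂_def
  have hF₁ : ∀ ω, F₁ ω = Y ω * G ω := fun ω => by
    rw [hY ω, hG ω, hF₁_def, Set.indicator_apply]
    by_cases h1 : T ω ≤ t <;> by_cases h2 : t < C ω <;>
      simp [hA_def, hB_def, h1, h2]
  have hF₂ : ∀ ω, F₂ ω = (1 - Y ω) * G ω := fun ω => by
    rw [hY ω, hG ω, hF₂_def, Set.indicator_apply]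
    by_cases h1 : T ω ≤ t <;> by_cases h2 : t < C ω <;>
      simp [hA'_def, hB_def, h1, h2, not_le.mp, lt_iff_not_ge]
  have hF₁0 : (0:Ω → ℝ) ≤ F₁ := fun ω => Set.indicator_apply_nonneg fun _ => zero_le_one
  have hF₂0 : (0:Ω → ℝ) ≤ F₂ := fun ω => Set.indicator_apply_nonneg fun _ => zero_le_one
  have hF₁1 : F₁ ≤ 1 := fun ω => Set.indicator_apply_le' (fun _ => le_refl 1)
    (fun _ => zero_le_one)
  have hF₂1 : F₂ ≤ 1 := fun ω => Set.indicator_apply_le' (fun _ => le_refl 1)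
    (fun _ => zero_le_one)
  have hF₁m : Measurable[mΩ] F₁ := measurable_const.indicator (hA.inter hB)
  have hF₂m : Measurable[mΩ] F₂ := measurable_const.indicator (hA'.inter hB)
  -- conditional independence consequences
  have key := (condIndepFun_iff_condExp_inter_preimage_eq_mul (hm' := hm)
    (μ := μ) hT hC).mp hTC
  have h1 : (μ[F₁|m]) =ᵐ[μ] fun ω => (μ[Y|m]) ω * (μ[G|m]) ω := by
    rw [hYind, hGind]
    exact key (Set.Iic t) (Set.Ioi t) measurableSet_Iic measurableSet_Ioi
  have hA'ind : (A'.indicator fun _ => (1:ℝ)) = (fun _ => (1:ℝ)) - Y := by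
    rw [hYind]
    funext ω
    by_cases h1 : T ω ≤ t <;>
      simp [Set.indicator_apply, hA'_def, hA_def, h1, not_le.mpr, lt_iff_not_ge]
  have h1int : Integrable (fun _ : Ω => (1:ℝ)) μ := @integrable_const Ω ℝ mΩ μ _ _ 1
  have hYint : Integrable Y μ := by
    rw [hYind]
    exact h1int.indicator hA
  have hsub : (μ[A'.indicator fun _ => (1:ℝ)|m]) =ᵐ[μ] fun ω => 1 - (μ[Y|m]) ω := by
    rw [hA'ind]
    filter_upwards [condExp_sub (μ := μ) (m := m) h1int hYint]
      with ω hω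
    rw [hω]
    simp [condExp_const hm (1:ℝ)]
  have h2 : (μ[F₂|m]) =ᵐ[μ] fun ω => (1 - (μ[Y|m]) ω) * (μ[G|m]) ω := by
    have h2' := key (Set.Ioi t) (Set.Ioi t) measurableSet_Ioi measurableSet_Ioi
    rw [hGind]
    filter_upwards [h2', hsub] with ω hω h'ω
    rw [hF₂_def] at *
    rw [hω, h'ω]
  -- rewrite both sides as integrals of F₁·a + F₂·b and its condexp analogue
  have goalL : ∫ ω, G ω * (-(Y ω * Real.log (p ω) + (1 - Y ω) * Real.log (1 - p ω))) ∂μ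
      = ∫ ω, (F₁ ω * a ω + F₂ ω * b ω) ∂μ := by
    refine integral_congr_ae (Filter.Eventually.of_forall fun ω => ?_)
    show G ω * (-(Y ω * Real.log (p ω) + (1 - Y ω) * Real.log (1 - p ω)))
      = F₁ ω * a ω + F₂ ω * b ω
    rw [hF₁ ω, hF₂ ω]
    simp only [ha_def, hb_def]
    ring
  have goalR : ∫ ω, (μ[G|m]) ω * ((μ[Y|m]) ω * (-Real.log (p ω))
        + (1 - (μ[Y|m]) ω) * (-Real.log (1 - p ω))) ∂μ
      = ∫ ω, ((μ[F₁|m]) ω * a ω + (μ[F₂|m]) ω * b ω) ∂μ := by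
    refine integral_congr_ae ?_
    filter_upwards [h1, h2] with ω hω h'ω
    show (μ[G|m]) ω * ((μ[Y|m]) ω * (-Real.log (p ω))
        + (1 - (μ[Y|m]) ω) * (-Real.log (1 - p ω)))
      = (μ[F₁|m]) ω * a ω + (μ[F₂|m]) ω * b ω
    rw [hω, h'ω]
    simp only [ha_def, hb_def]
    ring
  rw [goalL, goalR]
  -- now both sides via lintegrals
  have haM : Measurable[mΩ] a := ham.mono hm le_rfl
  have hbM : Measurable[mΩ] b := hbm.mono hm le_rfl
  have hcF₁0 : 0 ≤ᵐ[μ] (μ[F₁|m]) := condExp_nonneg (Filter.Eventually.of_forall hF₁0)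
  have hcF₂0 : 0 ≤ᵐ[μ] (μ[F₂|m]) := condExp_nonneg (Filter.Eventually.of_forall hF₂0)
  have hLmeas : AEStronglyMeasurable[mΩ] (fun ω => F₁ ω * a ω + F₂ ω * b ω) μ :=
    (((hF₁m.mul haM).add (hF₂m.mul hbM))).aestronglyMeasurable
  have hcF₁m : StronglyMeasurable[m] (μ[F₁|m]) := stronglyMeasurable_condExp
  have hcF₂m : StronglyMeasurable[m] (μ[F₂|m]) := stronglyMeasurable_condExp
  have hRmeas : AEStronglyMeasurable[mΩ]
      (fun ω => (μ[F₁|m]) ω * a ω + (μ[F₂|m]) ω * b ω) μ :=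
    ((((hcF₁m.mono hm).measurable.mul haM).add
      ((hcF₂m.mono hm).measurable.mul hbM))).aestronglyMeasurable
  rw [integral_eq_lintegral_of_nonneg_ae
      (Filter.Eventually.of_forall fun ω =>
        add_nonneg (mul_nonneg (hF₁0 ω) (ha0 ω)) (mul_nonneg (hF₂0 ω) (hb0 ω)))
      hLmeas,
    integral_eq_lintegral_of_nonneg_ae
      (by filter_upwards [hcF₁0, hcF₂0] with ω h h' using
        add_nonneg (mul_nonneg h (ha0 ω)) (mul_nonneg h' (hb0 ω)))
      hRmeas]
  congr 1
  calc ∫⁻ ω, ENNReal.ofReal (F₁ ω * a ω + F₂ ω * b ω) ∂μ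
      = ∫⁻ ω, (ENNReal.ofReal (F₁ ω * a ω) + ENNReal.ofReal (F₂ ω * b ω)) ∂μ := by
        refine lintegral_congr fun ω => ?_
        rw [ENNReal.ofReal_add (mul_nonneg (hF₁0 ω) (ha0 ω)) (mul_nonneg (hF₂0 ω) (hb0 ω))]
    _ = (∫⁻ ω, ENNReal.ofReal (F₁ ω * a ω) ∂μ) + ∫⁻ ω, ENNReal.ofReal (F₂ ω * b ω) ∂μ :=
        lintegral_add_left (hF₁m.mul haM).ennreal_ofReal _
    _ = (∫⁻ ω, ENNReal.ofReal ((μ[F₁|m]) ω * a ω) ∂μ)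
          + ∫⁻ ω, ENNReal.ofReal ((μ[F₂|m]) ω * b ω) ∂μ := by
        rw [lintegral_ofReal_condexp_mul hm μ hF₁m hF₁0 hF₁1 ham ha0,
          lintegral_ofReal_condexp_mul hm μ hF₂m hF₂0 hF₂1 hbm hb0]
    _ = ∫⁻ ω, (ENNReal.ofReal ((μ[F₁|m]) ω * a ω)
          + ENNReal.ofReal ((μ[F₂|m]) ω * b ω)) ∂μ :=
        (lintegral_add_left (((hcF₁m.mono hm).measurable.mul haM).ennreal_ofReal) _).symm
    _ = ∫⁻ ω, ENNReal.ofReal ((μ[F₁|m]) ω * a ω + (μ[F₂|m]) ω * b ω) ∂μ := by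
        refine lintegral_congr_ae ?_
        filter_upwards [hcF₁0, hcF₂0] with ω h h'
        rw [ENNReal.ofReal_add (mul_nonneg h (ha0 ω)) (mul_nonneg h' (hb0 ω))]
end

section
/- Under the setup of the previous statement (T ⟂ C | X, Y = 1{T ≤ t}, q(X) = P(T ≤ t | X) ∈ (0,1) a.s.), any measurable p : support(X) → (0,1) minimizing the population loss ℓ(p) = E[1{C > t}·BCE(p(X), Y)] satisfies p(X) = q(X) almost surely on the event {P(C > t | X) > 0}. Conversely, p(X) = q(X) a.s. on that event implies p minimizes ℓ. -/
open MeasureTheory ProbabilityTheory Real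


noncomputable def myBCE (a b : ℝ) : ℝ := -(a * Real.log b + (1 - a) * Real.log (1 - b))

lemma myAux1 {a b : ℝ} (ha : 0 < a) (hb : 0 < b) :
    a * (Real.log b - Real.log a) ≤ b - a := by
  have h := Real.log_le_sub_one_of_pos (show 0 < b / a from div_pos hb ha)
  rw [Real.log_div hb.ne' ha.ne'] at h
  have := mul_le_mul_of_nonneg_left h ha.le
  calc a * (Real.log b - Real.log a) ≤ a * (b / a - 1) := this
    _ = b - a := by field_simp

lemma myAux1' {a b : ℝ} (ha : 0 < a) (hb : 0 < b) (hne : b ≠ a) :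
    a * (Real.log b - Real.log a) < b - a := by
  have h := Real.log_lt_sub_one_of_pos (show 0 < b / a from div_pos hb ha)
    (by simp [div_eq_one_iff_eq ha.ne', hne])
  rw [Real.log_div hb.ne' ha.ne'] at h
  have := mul_lt_mul_of_pos_left h ha
  calc a * (Real.log b - Real.log a) < a * (b / a - 1) := this
    _ = b - a := by field_simp

lemma myBCE_self_le {a b : ℝ} (ha : a ∈ Set.Ioo (0:ℝ) 1) (hb : b ∈ Set.Ioo (0:ℝ) 1) :
    myBCE a a ≤ myBCE a b := by
  have h1 := myAux1 ha.1 hb.1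
  have h2 := myAux1 (by linarith [ha.2] : (0:ℝ) < 1 - a) (by linarith [hb.2] : (0:ℝ) < 1 - b)
  simp only [myBCE]; nlinarith [h1, h2]

lemma myBCE_self_lt {a b : ℝ} (ha : a ∈ Set.Ioo (0:ℝ) 1) (hb : b ∈ Set.Ioo (0:ℝ) 1)
    (hne : a ≠ b) : myBCE a a < myBCE a b := by
  have h1 := myAux1' ha.1 hb.1 (Ne.symm hne)
  have h2 := myAux1 (by linarith [ha.2] : (0:ℝ) < 1 - a) (by linarith [hb.2] : (0:ℝ) < 1 - b)
  simp only [myBCE]; nlinarith [h1, h2]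

lemma myHalfLog {x y : ℝ} (hx : 0 < x) (hy : 0 < y) :
    Real.log x + Real.log y ≤ 2 * Real.log ((x + y) / 2) := by
  have hm : 0 < (x + y) / 2 := by positivity
  have h1 := myAux1 hm hx
  have h2 := myAux1 hm hy
  by_contra hcon
  push_neg at hcon
  nlinarith [h1, h2, hcon]

lemma myBCE_mid_le {a b : ℝ} (ha : a ∈ Set.Ioo (0:ℝ) 1) (hb : b ∈ Set.Ioo (0:ℝ) 1) :
    myBCE a ((b + a) / 2) ≤ myBCE a b := by
  have h1 := myHalfLog hb.1 ha.1
  have h2 := myHalfLog (by linarith [hb.2] : (0:ℝ) < 1 - b) (by linarith [ha.2] : (0:ℝ) < 1 - a)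
  have he : (1 - b + (1 - a)) / 2 = 1 - (b + a) / 2 := by ring
  rw [he] at h2
  have h3 := myBCE_self_le ha hb
  simp only [myBCE] at h3 ⊢
  nlinarith [mul_le_mul_of_nonneg_left h1 ha.1.le,
    mul_le_mul_of_nonneg_left h2 (by linarith [ha.2] : (0:ℝ) ≤ 1 - a), h3]

lemma myBCE_mid_lt {a b : ℝ} (ha : a ∈ Set.Ioo (0:ℝ) 1) (hb : b ∈ Set.Ioo (0:ℝ) 1)
    (hne : a ≠ b) : myBCE a ((b + a) / 2) < myBCE a b := by
  have h1 := myHalfLog hb.1 ha.1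
  have h2 := myHalfLog (by linarith [hb.2] : (0:ℝ) < 1 - b) (by linarith [ha.2] : (0:ℝ) < 1 - a)
  have he : (1 - b + (1 - a)) / 2 = 1 - (b + a) / 2 := by ring
  rw [he] at h2
  have h3 := myBCE_self_lt ha hb hne
  simp only [myBCE] at h3 ⊢
  nlinarith [mul_le_mul_of_nonneg_left h1 ha.1.le,
    mul_le_mul_of_nonneg_left h2 (by linarith [ha.2] : (0:ℝ) ≤ 1 - a), h3]


lemma myCondexpLossFactor {Ω : Type*} {mΩ : MeasurableSpace Ω} [StandardBorelSpace Ω]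
    (μ : Measure Ω) [IsProbabilityMeasure μ]
    (T C : Ω → ℝ) (hT : Measurable T) (hC : Measurable C)
    {m : MeasurableSpace Ω} (hm : m ≤ mΩ)
    (hTC : CondIndepFun m hm T C μ) (t : ℝ)
    (Y G : Ω → ℝ) (hY : ∀ ω, Y ω = if T ω ≤ t then 1 else 0)
    (hG : ∀ ω, G ω = if t < C ω then 1 else 0)
    (g : Ω → ℝ) (hgm : Measurable[m] g) (hg01 : ∀ ω, g ω ∈ Set.Ioo (0:ℝ) 1)
    (hgint : Integrable
      (fun ω => G ω * (-(Y ω * Real.log (g ω) + (1 - Y ω) * Real.log (1 - g ω)))) μ) :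
    μ[(fun ω => G ω * (-(Y ω * Real.log (g ω) + (1 - Y ω) * Real.log (1 - g ω)))) | m]
      =ᵐ[μ] fun ω => (μ[G|m]) ω * myBCE ((μ[Y|m]) ω) (g ω) := by
  classical
  -- basic facts
  have hYmeas : Measurable[mΩ] Y := by
    have : Y = fun ω => if T ω ≤ t then (1:ℝ) else 0 := funext hY
    rw [this]; exact Measurable.ite (measurableSet_le hT measurable_const)
      measurable_const measurable_const
  have hGmeas : Measurable[mΩ] G := by
    have : G = fun ω => if t < C ω then (1:ℝ) else 0 := funext hG
    rw [this]; exact Measurable.ite (measurableSet_lt measurable_const hC)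
      measurable_const measurable_const
  have hY0 : ∀ ω, 0 ≤ Y ω := fun ω => by rw [hY]; split <;> norm_num
  have hY1 : ∀ ω, Y ω ≤ 1 := fun ω => by rw [hY]; split <;> norm_num
  have hG0 : ∀ ω, 0 ≤ G ω := fun ω => by rw [hG]; split <;> norm_num
  have hG1 : ∀ ω, G ω ≤ 1 := fun ω => by rw [hG]; split <;> norm_num
  have hgmeas : Measurable[mΩ] g := hgm.mono hm le_rfl
  have hYint : Integrable Y μ := by
    have hsm : AEStronglyMeasurable[mΩ] Y μ := hYmeas.aestronglyMeasurable
    refine (integrable_const (1:ℝ)).mono' hsm ?_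
    filter_upwards with ω
    rw [Real.norm_eq_abs, abs_of_nonneg (hY0 ω)]; exact hY1 ω
  have hGYint : Integrable (fun ω => G ω * Y ω) μ := by
    have hsm : AEStronglyMeasurable[mΩ] (fun ω => G ω * Y ω) μ :=
      (hGmeas.mul hYmeas).aestronglyMeasurable
    refine (integrable_const (1:ℝ)).mono' hsm ?_
    filter_upwards with ω
    rw [Real.norm_eq_abs, abs_of_nonneg (mul_nonneg (hG0 ω) (hY0 ω))]
    exact mul_le_one₀ (hG1 ω) (hY0 ω) (hY1 ω)
  have hGY'int : Integrable (fun ω => G ω * (1 - Y ω)) μ := by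
    have hsm : AEStronglyMeasurable[mΩ] (fun ω => G ω * (1 - Y ω)) μ :=
      (hGmeas.mul (measurable_const.sub hYmeas)).aestronglyMeasurable
    refine (integrable_const (1:ℝ)).mono' hsm ?_
    filter_upwards with ω
    rw [Real.norm_eq_abs, abs_of_nonneg (mul_nonneg (hG0 ω) (by linarith [hY1 ω]))]
    exact mul_le_one₀ (hG1 ω) (by linarith [hY1 ω]) (by linarith [hY0 ω])
  -- log bounds
  have hlg : ∀ ω, 0 ≤ -Real.log (g ω) := fun ω => by
    have := Real.log_nonpos (hg01 ω).1.le (hg01 ω).2.le; linarith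
  have hlg' : ∀ ω, 0 ≤ -Real.log (1 - g ω) := fun ω => by
    have := Real.log_nonpos (x := 1 - g ω) (by linarith [(hg01 ω).2])
      (by linarith [(hg01 ω).1])
    linarith
  -- split the loss
  set f1 : Ω → ℝ := fun ω => (-Real.log (g ω)) * (G ω * Y ω) with hf1
  set f2 : Ω → ℝ := fun ω => (-Real.log (1 - g ω)) * (G ω * (1 - Y ω)) with hf2
  have hsplit : (fun ω => G ω * (-(Y ω * Real.log (g ω) + (1 - Y ω) * Real.log (1 - g ω))))
      = f1 + f2 := by
    funext ω; simp only [hf1, hf2, Pi.add_apply]; ring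
  have h1nn : ∀ ω, 0 ≤ f1 ω := fun ω =>
    mul_nonneg (hlg ω) (mul_nonneg (hG0 ω) (hY0 ω))
  have h2nn : ∀ ω, 0 ≤ f2 ω := fun ω =>
    mul_nonneg (hlg' ω) (mul_nonneg (hG0 ω) (by linarith [hY1 ω]))
  have h1meas : Measurable[mΩ] f1 :=
    ((Real.measurable_log.comp hgmeas).neg).mul (hGmeas.mul hYmeas)
  have h2meas : Measurable[mΩ] f2 :=
    ((Real.measurable_log.comp (measurable_const.sub hgmeas)).neg).mul
      (hGmeas.mul (measurable_const.sub hYmeas))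
  have h1int : Integrable f1 μ := by
    have hsm : AEStronglyMeasurable[mΩ] f1 μ := h1meas.aestronglyMeasurable
    refine hgint.mono' hsm ?_
    filter_upwards with ω
    rw [Real.norm_eq_abs, abs_of_nonneg (h1nn ω)]
    have : G ω * (-(Y ω * Real.log (g ω) + (1 - Y ω) * Real.log (1 - g ω)))
        = f1 ω + f2 ω := by simp only [hf1, hf2]; ring
    rw [this]; linarith [h2nn ω]
  have h2int : Integrable f2 μ := by
    have hsm : AEStronglyMeasurable[mΩ] f2 μ := h2meas.aestronglyMeasurable
    refine hgint.mono' hsm ?_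
    filter_upwards with ω
    rw [Real.norm_eq_abs, abs_of_nonneg (h2nn ω)]
    have : G ω * (-(Y ω * Real.log (g ω) + (1 - Y ω) * Real.log (1 - g ω)))
        = f1 ω + f2 ω := by simp only [hf1, hf2]; ring
    rw [this]; linarith [h1nn ω]
  -- indicator identifications
  have hYind : Y = Set.indicator (T ⁻¹' Set.Iic t) (fun _ => (1:ℝ)) := by
    funext ω; rw [hY, Set.indicator_apply]
    simp [Set.mem_preimage, Set.mem_Iic]
  have hGind : G = Set.indicator (C ⁻¹' Set.Ioi t) (fun _ => (1:ℝ)) := by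
    funext ω; rw [hG, Set.indicator_apply]
    simp [Set.mem_preimage, Set.mem_Ioi]
  have hGYind : (fun ω => G ω * Y ω)
      = Set.indicator (T ⁻¹' Set.Iic t ∩ C ⁻¹' Set.Ioi t) (fun _ => (1:ℝ)) := by
    funext ω; rw [hY, hG, Set.indicator_apply]
    by_cases h1 : T ω ≤ t <;> by_cases h2 : t < C ω <;>
      simp [Set.mem_inter_iff, Set.mem_preimage, h1, h2]
  have hY'ind : (fun ω => 1 - Y ω) = Set.indicator (T ⁻¹' Set.Ioi t) (fun _ => (1:ℝ)) := by
    funext ω; rw [hY, Set.indicator_apply]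
    by_cases h1 : T ω ≤ t
    · simp [Set.mem_preimage, Set.mem_Ioi, h1, not_lt.mpr h1]
    · simp [Set.mem_preimage, Set.mem_Ioi, h1, not_le.mp h1]
  have hGY'ind : (fun ω => G ω * (1 - Y ω))
      = Set.indicator (T ⁻¹' Set.Ioi t ∩ C ⁻¹' Set.Ioi t) (fun _ => (1:ℝ)) := by
    funext ω; rw [hY, hG, Set.indicator_apply]
    by_cases h1 : T ω ≤ t <;> by_cases h2 : t < C ω
    · simp [Set.mem_inter_iff, Set.mem_preimage, Set.mem_Ioi, h1, h2, not_lt.mpr h1]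
    · simp [Set.mem_inter_iff, Set.mem_preimage, Set.mem_Ioi, h1, h2, not_lt.mpr h1]
    · simp [Set.mem_inter_iff, Set.mem_preimage, Set.mem_Ioi, h1, h2, not_le.mp h1]
    · simp [Set.mem_inter_iff, Set.mem_preimage, Set.mem_Ioi, h1, h2, not_le.mp h1]
  -- conditional independence consequences
  have hprod := (condIndepFun_iff_condExp_inter_preimage_eq_mul hT hC).mp hTC
  have hGYcond : μ[(fun ω => G ω * Y ω)|m]
      =ᵐ[μ] fun ω => (μ[Y|m]) ω * (μ[G|m]) ω := by
    have h := hprod (Set.Iic t) (Set.Ioi t) measurableSet_Iic measurableSet_Ioi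
    rw [hGYind, hYind, hGind]
    exact h
  have h1mYcond : μ[(fun ω => 1 - Y ω)|m] =ᵐ[μ] fun ω => 1 - (μ[Y|m]) ω := by
    have h : μ[(fun _ => (1:ℝ)) - Y|m] =ᵐ[μ] μ[(fun _ => (1:ℝ))|m] - μ[Y|m] :=
      condExp_sub (integrable_const (1:ℝ)) hYint _
    have hc : μ[(fun _ => (1:ℝ))|m] = fun _ => (1:ℝ) := condExp_const hm 1
    calc μ[(fun ω => 1 - Y ω)|m] = μ[(fun _ => (1:ℝ)) - Y|m] := rfl
      _ =ᵐ[μ] μ[(fun _ => (1:ℝ))|m] - μ[Y|m] := h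
      _ =ᵐ[μ] fun ω => 1 - (μ[Y|m]) ω := by rw [hc]; rfl
  have hGY'cond : μ[(fun ω => G ω * (1 - Y ω))|m]
      =ᵐ[μ] fun ω => (1 - (μ[Y|m]) ω) * (μ[G|m]) ω := by
    have h := hprod (Set.Ioi t) (Set.Ioi t) measurableSet_Ioi measurableSet_Ioi
    rw [hGY'ind, hGind]
    refine h.trans ?_
    rw [← hY'ind]
    filter_upwards [h1mYcond] with ω hω
    rw [hω]
  -- pull-out property
  have hpull1 : μ[f1|m] =ᵐ[μ] fun ω => (-Real.log (g ω)) * (μ[(fun ω => G ω * Y ω)|m]) ω := by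
    have hsm : StronglyMeasurable[m] (fun ω => -Real.log (g ω)) :=
      ((Real.measurable_log.comp hgm).neg).stronglyMeasurable
    exact condExp_mul_of_stronglyMeasurable_left hsm h1int hGYint
  have hpull2 : μ[f2|m]
      =ᵐ[μ] fun ω => (-Real.log (1 - g ω)) * (μ[(fun ω => G ω * (1 - Y ω))|m]) ω := by
    have hsm : StronglyMeasurable[m] (fun ω => -Real.log (1 - g ω)) :=
      ((Real.measurable_log.comp (measurable_const.sub hgm)).neg).stronglyMeasurable
    exact condExp_mul_of_stronglyMeasurable_left hsm h2int hGY'int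
  -- combine
  rw [hsplit]
  have hadd : μ[f1 + f2|m] =ᵐ[μ] μ[f1|m] + μ[f2|m] := condExp_add h1int h2int _
  filter_upwards [hadd, hpull1, hpull2, hGYcond, hGY'cond] with ω h1 h2 h3 h4 h5
  simp only [Pi.add_apply] at h1
  rw [h1, h2, h3, h4, h5, myBCE]
  ring

/-- Characterization of minimizers of the censored population BCE loss
`ℓ(p) = E[1{C > t}·BCE(p(X), Y)]`: under `T ⟂ C | X` and `q(X) = P(T ≤ t | X) ∈ (0,1)` a.s.,
a candidate `p` minimizes `ℓ` iff `p(X) = q(X)` a.s. on the event `{P(C > t | X) > 0}`. -/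
theorem censored_bce_loss_minimizer
    {Ω β : Type*} {mΩ : MeasurableSpace Ω} [StandardBorelSpace Ω] [MeasurableSpace β]
    (μ : Measure Ω) [IsProbabilityMeasure μ]
    (X : Ω → β) (T C : Ω → ℝ) (hT : Measurable T) (hC : Measurable C)
    (hm : MeasurableSpace.comap X inferInstance ≤ mΩ)
    (hTC : CondIndepFun (MeasurableSpace.comap X inferInstance) hm T C μ)
    (t : ℝ)
    (Y : Ω → ℝ) (hY : ∀ ω, Y ω = if T ω ≤ t then 1 else 0)
    (G : Ω → ℝ) (hG : ∀ ω, G ω = if t < C ω then 1 else 0)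
    (q : Ω → ℝ) (hq : q = condExp (MeasurableSpace.comap X inferInstance) μ Y)
    (hq01 : ∀ᵐ ω ∂μ, q ω ∈ Set.Ioo (0:ℝ) 1)
    -- the class of candidate predictors and their losses
    (Cand : (Ω → ℝ) → Prop)
    (hCand : ∀ g, Cand g ↔ Measurable[MeasurableSpace.comap X inferInstance] g
        ∧ (∀ ω, g ω ∈ Set.Ioo (0:ℝ) 1)
        ∧ Integrable (fun ω => G ω
            * (-(Y ω * Real.log (g ω) + (1 - Y ω) * Real.log (1 - g ω)))) μ)
    (ℓ : (Ω → ℝ) → ℝ)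
    (hℓ : ∀ g, ℓ g = ∫ ω, G ω
        * (-(Y ω * Real.log (g ω) + (1 - Y ω) * Real.log (1 - g ω))) ∂μ)
    (p : Ω → ℝ) (hp : Cand p) :
    ((∀ g, Cand g → ℓ p ≤ ℓ g) →
      ∀ᵐ ω ∂μ, 0 < condExp (MeasurableSpace.comap X inferInstance) μ G ω → p ω = q ω) ∧
    ((∀ᵐ ω ∂μ, 0 < condExp (MeasurableSpace.comap X inferInstance) μ G ω → p ω = q ω) →
      ∀ g, Cand g → ℓ p ≤ ℓ g) := by
  classical
  set m : MeasurableSpace Ω := MeasurableSpace.comap X inferInstance with hmdef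
  obtain ⟨hpm, hp01, hpint⟩ := (hCand p).mp hp
  -- basic measurability / boundedness facts
  have hYmeas : Measurable[mΩ] Y := by
    have : Y = fun ω => if T ω ≤ t then (1:ℝ) else 0 := funext hY
    rw [this]; exact Measurable.ite (measurableSet_le hT measurable_const)
      measurable_const measurable_const
  have hGmeas : Measurable[mΩ] G := by
    have : G = fun ω => if t < C ω then (1:ℝ) else 0 := funext hG
    rw [this]; exact Measurable.ite (measurableSet_lt measurable_const hC)
      measurable_const measurable_const
  have hG0 : ∀ ω, 0 ≤ G ω := fun ω => by rw [hG]; split <;> norm_num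
  have hG1 : ∀ ω, G ω ≤ 1 := fun ω => by rw [hG]; split <;> norm_num
  have hY0 : ∀ ω, 0 ≤ Y ω := fun ω => by rw [hY]; split <;> norm_num
  have hY1 : ∀ ω, Y ω ≤ 1 := fun ω => by rw [hY]; split <;> norm_num
  have hGint : Integrable G μ := by
    have hsm : AEStronglyMeasurable[mΩ] G μ := hGmeas.aestronglyMeasurable
    refine (integrable_const (1:ℝ)).mono' hsm ?_
    filter_upwards with ω
    rw [Real.norm_eq_abs, abs_of_nonneg (hG0 ω)]; exact hG1 ω
  -- the factorization of the conditional loss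
  have key : ∀ g : Ω → ℝ, Measurable[m] g → (∀ ω, g ω ∈ Set.Ioo (0:ℝ) 1) →
      (Integrable (fun ω => G ω
        * (-(Y ω * Real.log (g ω) + (1 - Y ω) * Real.log (1 - g ω)))) μ) →
      μ[(fun ω => G ω * (-(Y ω * Real.log (g ω) + (1 - Y ω) * Real.log (1 - g ω)))) | m]
        =ᵐ[μ] fun ω => (μ[G|m]) ω * myBCE (q ω) (g ω) := by
    intro g h1 h2 h3
    have := myCondexpLossFactor μ T C hT hC hm hTC t Y G hY hG g h1 h2 h3
    rw [hq]
    exact this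
  have ℓeq : ∀ g : Ω → ℝ, Measurable[m] g → (∀ ω, g ω ∈ Set.Ioo (0:ℝ) 1) →
      (Integrable (fun ω => G ω
        * (-(Y ω * Real.log (g ω) + (1 - Y ω) * Real.log (1 - g ω)))) μ) →
      ℓ g = ∫ ω, (μ[G|m]) ω * myBCE (q ω) (g ω) ∂μ := by
    intro g h1 h2 h3
    calc ℓ g = ∫ ω, G ω * (-(Y ω * Real.log (g ω) + (1 - Y ω) * Real.log (1 - g ω))) ∂μ :=
          hℓ g
      _ = ∫ ω, (μ[(fun ω => G ω
            * (-(Y ω * Real.log (g ω) + (1 - Y ω) * Real.log (1 - g ω)))) | m]) ω ∂μ :=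
          (integral_condExp hm).symm
      _ = ∫ ω, (μ[G|m]) ω * myBCE (q ω) (g ω) ∂μ := integral_congr_ae (key g h1 h2 h3)
  have hbint : ∀ g : Ω → ℝ, Measurable[m] g → (∀ ω, g ω ∈ Set.Ioo (0:ℝ) 1) →
      (Integrable (fun ω => G ω
        * (-(Y ω * Real.log (g ω) + (1 - Y ω) * Real.log (1 - g ω)))) μ) →
      Integrable (fun ω => (μ[G|m]) ω * myBCE (q ω) (g ω)) μ := by
    intro g h1 h2 h3
    exact (integrable_condExp).congr (key g h1 h2 h3)
  have hc_nonneg : ∀ᵐ ω ∂μ, 0 ≤ (μ[G|m]) ω := by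
    have : (0:Ω → ℝ) ≤ᵐ[μ] μ[G|m] :=
      condExp_nonneg (Filter.Eventually.of_forall hG0)
    filter_upwards [this] with ω h using h
  constructor
  · -- minimizer ⇒ p = q a.e. on {c > 0}
    intro hmin
    have hqm : Measurable[m] q := by
      rw [hq]; exact stronglyMeasurable_condExp.measurable
    set q' : Ω → ℝ := fun ω => if q ω ∈ Set.Ioo (0:ℝ) 1 then q ω else 1/2 with hq'def
    have hq'm : Measurable[m] q' := by
      refine Measurable.ite ?_ hqm measurable_const
      exact hqm measurableSet_Ioo
    have hq'01 : ∀ ω, q' ω ∈ Set.Ioo (0:ℝ) 1 := by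
      intro ω
      simp only [hq'def]
      split
      · assumption
      · norm_num
    have hq'q : q' =ᵐ[μ] q := by
      filter_upwards [hq01] with ω h
      show (if q ω ∈ Set.Ioo (0:ℝ) 1 then q ω else 1/2) = q ω
      rw [if_pos h]
    set g0 : Ω → ℝ := fun ω => (p ω + q' ω) / 2 with hg0def
    have hg0m : Measurable[m] g0 := (hpm.add hq'm).div_const 2
    have hg001 : ∀ ω, g0 ω ∈ Set.Ioo (0:ℝ) 1 := by
      intro ω
      have h1 := hp01 ω; have h2 := hq'01 ω
      constructor
      · simp only [hg0def]; have := h1.1; have := h2.1; linarith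
      · simp only [hg0def]; have := h1.2; have := h2.2; linarith
    have hg0meas : Measurable[mΩ] g0 := hg0m.mono hm le_rfl
    have hpmeas : Measurable[mΩ] p := hpm.mono hm le_rfl
    -- pointwise bound for integrability of the loss of g0
    have hbound : ∀ ω, ‖G ω * (-(Y ω * Real.log (g0 ω) + (1 - Y ω) * Real.log (1 - g0 ω)))‖
        ≤ G ω * (-(Y ω * Real.log (p ω) + (1 - Y ω) * Real.log (1 - p ω)))
          + Real.log 2 * G ω := by
      intro ω
      have hp1 := hp01 ω; have hq1 := hq'01 ω; have hg1 := hg001 ω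
      have hlog1 : -Real.log (g0 ω) ≤ -Real.log (p ω) + Real.log 2 := by
        have h1 : Real.log (p ω / 2) ≤ Real.log (g0 ω) := by
          refine Real.log_le_log (by linarith [hp1.1]) ?_
          simp only [hg0def]; linarith [hq1.1]
        rw [Real.log_div hp1.1.ne' two_ne_zero] at h1
        linarith
      have hlog2 : -Real.log (1 - g0 ω) ≤ -Real.log (1 - p ω) + Real.log 2 := by
        have h1 : Real.log ((1 - p ω) / 2) ≤ Real.log (1 - g0 ω) := by
          refine Real.log_le_log (by linarith [hp1.2]) ?_
          simp only [hg0def]; linarith [hq1.2]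
        rw [Real.log_div (by linarith [hp1.2] : (1:ℝ) - p ω ≠ 0) two_ne_zero] at h1
        linarith
      have hlgnn : 0 ≤ -Real.log (g0 ω) := by
        have := Real.log_nonpos hg1.1.le hg1.2.le; linarith
      have hlgnn' : 0 ≤ -Real.log (1 - g0 ω) := by
        have := Real.log_nonpos (x := 1 - g0 ω) (by linarith [hg1.2]) (by linarith [hg1.1])
        linarith
      have inner_nn : 0 ≤ -(Y ω * Real.log (g0 ω) + (1 - Y ω) * Real.log (1 - g0 ω)) := by
        nlinarith [mul_nonneg (hY0 ω) hlgnn,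
          mul_nonneg (by linarith [hY1 ω] : (0:ℝ) ≤ 1 - Y ω) hlgnn']
      rw [Real.norm_eq_abs, abs_of_nonneg (mul_nonneg (hG0 ω) inner_nn)]
      have d1 : Y ω * (-Real.log (g0 ω)) ≤ Y ω * (-Real.log (p ω) + Real.log 2) :=
        mul_le_mul_of_nonneg_left hlog1 (hY0 ω)
      have d2 : (1 - Y ω) * (-Real.log (1 - g0 ω))
          ≤ (1 - Y ω) * (-Real.log (1 - p ω) + Real.log 2) :=
        mul_le_mul_of_nonneg_left hlog2 (by linarith [hY1 ω])
      have d3 : -(Y ω * Real.log (g0 ω) + (1 - Y ω) * Real.log (1 - g0 ω))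
          ≤ -(Y ω * Real.log (p ω) + (1 - Y ω) * Real.log (1 - p ω)) + Real.log 2 := by
        nlinarith [d1, d2]
      have final := mul_le_mul_of_nonneg_left d3 (hG0 ω)
      nlinarith [final]
    have hg0int : Integrable (fun ω => G ω
        * (-(Y ω * Real.log (g0 ω) + (1 - Y ω) * Real.log (1 - g0 ω)))) μ := by
      have hmeas : AEStronglyMeasurable[mΩ] (fun ω => G ω
          * (-(Y ω * Real.log (g0 ω) + (1 - Y ω) * Real.log (1 - g0 ω)))) μ := by
        refine Measurable.aestronglyMeasurable ?_
        exact hGmeas.mul (((hYmeas.mul (Real.measurable_log.comp hg0meas)).add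
          ((measurable_const.sub hYmeas).mul
            (Real.measurable_log.comp (measurable_const.sub hg0meas)))).neg)
      refine (hpint.add (hGint.const_mul (Real.log 2))).mono' hmeas ?_
      filter_upwards with ω
      exact hbound ω
    have hg0cand : Cand g0 := (hCand g0).mpr ⟨hg0m, hg001, hg0int⟩
    have hle := hmin g0 hg0cand
    -- difference of conditional losses
    set h : Ω → ℝ := fun ω => (μ[(fun ω => G ω
        * (-(Y ω * Real.log (p ω) + (1 - Y ω) * Real.log (1 - p ω)))) | m]) ω
      - (μ[(fun ω => G ω
        * (-(Y ω * Real.log (g0 ω) + (1 - Y ω) * Real.log (1 - g0 ω)))) | m]) ω with hhdef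
    have hhe : h =ᵐ[μ] fun ω => (μ[G|m]) ω * (myBCE (q ω) (p ω) - myBCE (q ω) (g0 ω)) := by
      filter_upwards [key p hpm hp01 hpint, key g0 hg0m hg001 hg0int] with ω e1 e2
      simp only [hhdef]
      rw [e1, e2]; ring
    have hhint : Integrable h μ := integrable_condExp.sub integrable_condExp
    have hhnn : 0 ≤ᵐ[μ] h := by
      filter_upwards [hhe, hc_nonneg, hq01, hq'q] with ω e1 e2 e3 e4
      rw [Pi.zero_apply, e1]
      have hg0q : g0 ω = (p ω + q ω) / 2 := by simp only [hg0def]; rw [e4]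
      have hmid : myBCE (q ω) ((p ω + q ω) / 2) ≤ myBCE (q ω) (p ω) :=
        myBCE_mid_le e3 (hp01 ω)
      rw [hg0q]
      have : 0 ≤ myBCE (q ω) (p ω) - myBCE (q ω) ((p ω + q ω) / 2) := by linarith
      exact mul_nonneg e2 this
    have hinth : ∫ ω, h ω ∂μ = ℓ p - ℓ g0 := by
      simp only [hhdef]
      rw [integral_sub integrable_condExp integrable_condExp,
        integral_condExp hm, integral_condExp hm, hℓ p, hℓ g0]
    have hint0 : ∫ ω, h ω ∂μ = 0 := by
      have h1 : ∫ ω, h ω ∂μ ≤ 0 := by rw [hinth]; linarith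
      have h2 : 0 ≤ ∫ ω, h ω ∂μ := integral_nonneg_of_ae hhnn
      linarith
    have hzero : h =ᵐ[μ] 0 := (integral_eq_zero_iff_of_nonneg_ae hhnn hhint).mp hint0
    filter_upwards [hzero, hhe, hq01, hq'q] with ω e0 e1 e3 e4
    intro hcpos
    by_contra hne
    have hg0q : g0 ω = (p ω + q ω) / 2 := by simp only [hg0def]; rw [e4]
    have hmid : myBCE (q ω) ((p ω + q ω) / 2) < myBCE (q ω) (p ω) :=
      myBCE_mid_lt e3 (hp01 ω) (fun hh => hne (hh.symm))
    have hEq : (μ[G|m]) ω * (myBCE (q ω) (p ω) - myBCE (q ω) (g0 ω)) = 0 := by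
      rw [← e1]; exact e0
    rw [hg0q] at hEq
    have : myBCE (q ω) (p ω) - myBCE (q ω) ((p ω + q ω) / 2) = 0 := by
      rcases mul_eq_zero.mp hEq with hc | hd
      · exact absurd hc (ne_of_gt hcpos)
      · exact hd
    linarith
  · -- p = q a.e. on {c > 0} ⇒ minimizer
    intro hpq g hg
    obtain ⟨hgm, hg01, hgint⟩ := (hCand g).mp hg
    rw [ℓeq p hpm hp01 hpint, ℓeq g hgm hg01 hgint]
    refine integral_mono_ae (hbint p hpm hp01 hpint) (hbint g hgm hg01 hgint) ?_
    filter_upwards [hpq, hc_nonneg, hq01] with ω h1 h2 h3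
    rcases eq_or_lt_of_le h2 with hc | hc
    · rw [← hc]; simp
    · rw [h1 hc]
      exact mul_le_mul_of_nonneg_left (myBCE_self_le h3 (hg01 ω)) h2
end
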